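/- Let S be a Noetherian ring with resolution data as above (R = S/I with finite S-free resolution E of length c and ∂_c ≅ ∂_1^*). The isomorphism M → Tor^S_c(R, M) induced by σ^M_{c,•} is functorial in M: for any R-module homomorphism φ: M → N, with chosen resolutions and chain maps, the square with horizontal maps Tor^S_i(R,φ) and vertical maps induced by σ^M and σ^N commutes. The functoriality follows because any two chain maps E ⊗ K → L lifting the same map R ⊗ M → N are homotopic, and the homotopy restricts (since R ⊗ ∂_c = 0) to a homotopy between the induced maps R ⊗ E_c ⊗ K → R ⊗ L. -/

import Mathlib

/-!
STATEMENT 13: In the setting of Theorem "sigma" (`S` Noetherian, `R = S/I` with a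
finite `S`-free resolution `E` of length `c+1` satisfying `∂_{c+1} ≅ ∂₁^*`), the
isomorphism `M → Tor^S_{c+1}(R, M)` induced by `σ^M_{c+1,•}` is functorial in `M`:
for any `R`-module map `φ : M → N`, lifted to `φ̂ : K → L` on `S`-free resolutions,
the square formed by `Tor(R, φ)` and the maps induced by `σ^M, σ^N` commutes
(on homology of `K/IK → L/IL`, stated elementwise).
-/

/-- transport along an equality of indices -/
def castK {S : Type*} [CommRing S] {K : ℕ → Type*}
    [∀ i, AddCommGroup (K i)] [∀ i, Module S (K i)] {a b : ℕ} (h : a = b) :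
    K a →ₗ[S] K b := by subst h; exact LinearMap.id

/-- reduction of a linear map modulo `I` -/
def quotMap {S : Type*} [CommRing S] (I : Ideal S) {A B : Type*}
    [AddCommGroup A] [Module S A] [AddCommGroup B] [Module S B] (φ : A →ₗ[S] B) :
    (A ⧸ (I • (⊤ : Submodule S A))) →ₗ[S] (B ⧸ (I • (⊤ : Submodule S B))) :=
  Submodule.mapQ _ _ φ (by
    refine Submodule.smul_le.mpr fun r hr m _ => ?_
    simp only [Submodule.mem_comap, map_smul]
    exact Submodule.smul_mem_smul hr Submodule.mem_top)

/-!
Both `σᴺ ∘ (1 ⊗ φ̂)` and `φ̂ ∘ σᴹ` are chain maps `E ⊗ K → L` lifting the same map `R ⊗ M → N`,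
so their difference `F` is null-homotopic, `F = ∂H + H∂`: `E ⊗ K` is degreewise projective and `L`
is a resolution. Take `y = u⁻¹(1) ∈ E_{c+1}`. Since `∂_{c+1} ≅ ∂₁^*` and `∂₁` has image `I`, we get
`∂y ∈ I E_c`; hence `∂(y ⊗ x) ∈ I (E ⊗ K)` whenever `x` is a cycle mod `I`, and then
`F(y ⊗ x) ≡ ∂H(y ⊗ x)` is a boundary mod `I`.
-/

open TensorProduct

section IdealSmulTop

variable {S : Type*} [CommRing S] (I : Ideal S) {A B P : Type*}
  [AddCommGroup A] [Module S A] [AddCommGroup B] [Module S B] [AddCommGroup P] [Module S P]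

@[simp]
lemma quotMap_mk (f : A →ₗ[S] B) (v : A) :
    quotMap I f (Submodule.Quotient.mk v) = Submodule.Quotient.mk (f v) :=
  rfl

lemma mk_mem_range_quotMap_of_sub_mem {f : A →ₗ[S] B} {a : A} {b : B}
    (h : f a - b ∈ I • (⊤ : Submodule S B)) :
    Submodule.Quotient.mk b ∈ LinearMap.range (quotMap I f) :=
  ⟨Submodule.Quotient.mk a, by rw [quotMap_mk, Submodule.Quotient.eq]; exact h⟩

lemma LinearMap.apply_mem_smul_top (f : A →ₗ[S] B) {v : A} (hv : v ∈ I • (⊤ : Submodule S A)) :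
    f v ∈ I • (⊤ : Submodule S B) :=
  Submodule.smul_top_le_comap_smul_top I f hv

lemma tmul_mem_smul_top_of_left_mem {y : A} (hy : y ∈ I • (⊤ : Submodule S A)) (x : B) :
    y ⊗ₜ[S] x ∈ I • (⊤ : Submodule S (A ⊗[S] B)) :=
  ((TensorProduct.mk S A B).flip x).apply_mem_smul_top I hy

lemma tmul_mem_smul_top_of_right_mem (y : A) {x : B} (hx : x ∈ I • (⊤ : Submodule S B)) :
    y ⊗ₜ[S] x ∈ I • (⊤ : Submodule S (A ⊗[S] B)) :=
  (TensorProduct.mk S A B y).apply_mem_smul_top I hx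

lemma Module.Dual.mem_smul_top_of_forall_mem [Module.Free S P] [Module.Finite S P]
    {f : Module.Dual S P} (hf : ∀ p, f p ∈ I) : f ∈ I • (⊤ : Submodule S (Module.Dual S P)) := by
  rw [← (Module.Free.chooseBasis S P).sum_dual_apply_smul_coord f]
  exact Submodule.sum_mem _ fun k _ => Submodule.smul_mem_smul (hf _) trivial

lemma dualMap_mem_smul_top [Module.Free S P] [Module.Finite S P] (e₀ : A ≃ₗ[S] S)
    {d₀ : P →ₗ[S] A} (hd₀ : LinearMap.range (e₀.toLinearMap ∘ₗ d₀) = I) (f : Module.Dual S A) :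
    d₀.dualMap f ∈ I • (⊤ : Submodule S (Module.Dual S P)) := by
  refine Module.Dual.mem_smul_top_of_forall_mem I fun p => ?_
  have hp : e₀ (d₀ p) ∈ I := hd₀ ▸ ⟨p, rfl⟩
  have : f (d₀ p) = e₀ (d₀ p) * f (e₀.symm 1) := by
    rw [← smul_eq_mul, ← map_smul, ← map_smul, smul_eq_mul, mul_one, e₀.symm_apply_apply]
  rw [LinearMap.dualMap_apply, this]
  exact I.mul_mem_right _ hp

end IdealSmulTop

lemma Module.Projective.exists_comp_eq_of_exact {S : Type*} [CommRing S] {P A B C : Type*}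
    [AddCommGroup P] [Module S P] [Module.Projective S P] [AddCommGroup A] [Module S A]
    [AddCommGroup B] [Module S B] [AddCommGroup C] [Module S C]
    {f : A →ₗ[S] B} {g : B →ₗ[S] C} (hfg : LinearMap.ker g = LinearMap.range f)
    {G : P →ₗ[S] B} (hG : g ∘ₗ G = 0) : ∃ h : P →ₗ[S] A, f ∘ₗ h = G := by
  have hGf : ∀ p, G p ∈ LinearMap.range f := fun p => hfg ▸ LinearMap.congr_fun hG p
  obtain ⟨h, hh⟩ := Module.projective_lifting_property f.rangeRestrict
    (G.codRestrict _ hGf) f.surjective_rangeRestrict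
  exact ⟨h, LinearMap.ext fun p => congrArg Subtype.val (LinearMap.congr_fun hh p)⟩

section TensorHomotopy

variable {S : Type*} [CommRing S] {E K L : ℕ → Type*}
  [∀ i, AddCommGroup (E i)] [∀ i, Module S (E i)]
  [∀ i, AddCommGroup (K i)] [∀ i, Module S (K i)]
  [∀ i, AddCommGroup (L i)] [∀ i, Module S (L i)]
  (dE : ∀ i, E (i + 1) →ₗ[S] E i) (dK : ∀ i, K (i + 1) →ₗ[S] K i)

lemma apply_castK (f : ∀ i, K i →ₗ[S] L i) {a b : ℕ} (h : a = b) (v : K a) :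
    f b (castK (S := S) h v) = castK (S := S) h (f a v) := by
  subst h; rfl

lemma apply_castK_succ (d : ∀ i, L (i + 1) →ₗ[S] L i) {a b : ℕ} (h : a + 1 = b + 1)
    (v : L (a + 1)) : d b (castK (S := S) h v) = castK (S := S) (by omega) (d a v) := by
  obtain rfl : a = b := by omega
  rfl

/-- `H ∘ ∂`, where `∂ (y ⊗ x) = ∂y ⊗ x + (-1)^i y ⊗ ∂x` is the total differential of `E ⊗ K`. -/
def compTotalDiff (H : ∀ i j, (E i ⊗[S] K j) →ₗ[S] L (i + j + 1)) :
    ∀ i j, (E i ⊗[S] K j) →ₗ[S] L (i + j)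
  | 0, 0 => 0
  | 0, j + 1 => H 0 j ∘ₗ map LinearMap.id (dK j)
  | i + 1, 0 => H i 0 ∘ₗ map (dE i) LinearMap.id
  | i + 1, j + 1 =>
      (castK (by omega) : L (i + (j + 1) + 1) →ₗ[S] L ((i + 1) + (j + 1))) ∘ₗ
          (H i (j + 1) ∘ₗ map (dE i) LinearMap.id)
        + ((-1 : ℤ) ^ (i + 1)) • (H (i + 1) j ∘ₗ map LinearMap.id (dK j))

variable {dE dK} (H : ∀ i j, (E i ⊗[S] K j) →ₗ[S] L (i + j + 1))

@[simp]
lemma compTotalDiff_zero_zero : compTotalDiff dE dK H 0 0 = 0 := rfl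

@[simp]
lemma compTotalDiff_zero_succ_tmul {j : ℕ} (y : E 0) (x : K (j + 1)) :
    compTotalDiff dE dK H 0 (j + 1) (y ⊗ₜ x) = H 0 j (y ⊗ₜ dK j x) := rfl

@[simp]
lemma compTotalDiff_succ_zero_tmul {i : ℕ} (y : E (i + 1)) (x : K 0) :
    compTotalDiff dE dK H (i + 1) 0 (y ⊗ₜ x) = H i 0 (dE i y ⊗ₜ x) := rfl

@[simp]
lemma compTotalDiff_succ_succ_tmul {i j : ℕ} (y : E (i + 1)) (x : K (j + 1)) :
    compTotalDiff dE dK H (i + 1) (j + 1) (y ⊗ₜ x)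
      = castK (S := S) (K := L) (by omega) (H i (j + 1) (dE i y ⊗ₜ x))
        + ((-1 : ℤ) ^ (i + 1)) • H (i + 1) j (y ⊗ₜ dK j x) := rfl

lemma compTotalDiff_congr {H' : ∀ i j, (E i ⊗[S] K j) →ₗ[S] L (i + j + 1)} {i j : ℕ}
    (h : ∀ i' j', i' + j' < i + j → H i' j' = H' i' j') :
    compTotalDiff dE dK H i j = compTotalDiff dE dK H' i j := by
  rcases i with _ | i <;> rcases j with _ | j
  · rfl
  · simp only [compTotalDiff, h 0 j (by omega)]
  · simp only [compTotalDiff, h i 0 (by omega)]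
  · simp only [compTotalDiff, h i (j + 1) (by omega), h (i + 1) j (by omega)]

lemma compTotalDiff_zero_tmul_dK (hdK : ∀ j x, dK j (dK (j + 1) x) = 0) {j : ℕ} (y : E 0)
    (x : K (j + 1)) :
    compTotalDiff dE dK H 0 j (y ⊗ₜ dK j x) = 0 := by
  rcases j with _ | j
  · rfl
  · simp [hdK]

lemma compTotalDiff_dE_tmul_zero (hdE : ∀ i y, dE i (dE (i + 1) y) = 0) {i : ℕ} (y : E (i + 1))
    (x : K 0) : compTotalDiff dE dK H i 0 (dE i y ⊗ₜ x) = 0 := by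
  rcases i with _ | i
  · rfl
  · simp [hdE]

/-- `∂ ∘ ∂ = 0` on `E ⊗ K`, evaluated on `y ⊗ x`. -/
lemma compTotalDiff_boundary (hdE : ∀ i y, dE i (dE (i + 1) y) = 0)
    (hdK : ∀ j x, dK j (dK (j + 1) x) = 0) {i j : ℕ} (y : E (i + 1)) (x : K (j + 1)) :
    castK (S := S) (K := L) (a := i + (j + 1)) (Nat.add_right_comm i j 1)
        (compTotalDiff dE dK H i (j + 1) (dE i y ⊗ₜ x))
      + ((-1 : ℤ) ^ (i + 1)) • compTotalDiff dE dK H (i + 1) j (y ⊗ₜ dK j x) = 0 := by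
  rcases i with _ | i <;> rcases j with _ | j <;>
    simp only [compTotalDiff_zero_succ_tmul, compTotalDiff_succ_zero_tmul,
      compTotalDiff_succ_succ_tmul, hdE, hdK, tmul_zero, zero_tmul, map_zero, smul_zero,
      add_zero, zero_add, map_neg, map_zsmul, pow_succ, pow_zero, mul_neg, mul_one, neg_smul,
      one_smul, neg_neg]
  exacts [add_neg_cancel _, add_neg_cancel _, neg_add_cancel _, neg_add_cancel _]

lemma compTotalDiff_succ_zero_tmul_mem (I : Ideal S) {i : ℕ} {y : E (i + 1)}
    (hy : dE i y ∈ I • (⊤ : Submodule S (E i))) (x : K 0) :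
    compTotalDiff dE dK H (i + 1) 0 (y ⊗ₜ x) ∈ I • (⊤ : Submodule S (L (i + 1))) :=
  (H i 0).apply_mem_smul_top I (tmul_mem_smul_top_of_left_mem I hy x)

lemma compTotalDiff_succ_succ_tmul_mem (I : Ideal S) {i j : ℕ} {y : E (i + 1)}
    (hy : dE i y ∈ I • (⊤ : Submodule S (E i))) {x : K (j + 1)}
    (hx : dK j x ∈ I • (⊤ : Submodule S (K j))) :
    compTotalDiff dE dK H (i + 1) (j + 1) (y ⊗ₜ x)
      ∈ I • (⊤ : Submodule S (L ((i + 1) + (j + 1)))) := by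
  rw [compTotalDiff_succ_succ_tmul]
  exact add_mem
    ((castK _).apply_mem_smul_top I ((H i (j + 1)).apply_mem_smul_top I
      (tmul_mem_smul_top_of_left_mem I hy x)))
    (zsmul_mem ((H (i + 1) j).apply_mem_smul_top I (tmul_mem_smul_top_of_right_mem I y hx)) _)

end TensorHomotopy

section TensorChainMap

variable {S : Type*} [CommRing S] {E K L : ℕ → Type*}
  [∀ i, AddCommGroup (E i)] [∀ i, Module S (E i)]
  [∀ i, AddCommGroup (K i)] [∀ i, Module S (K i)]
  [∀ i, AddCommGroup (L i)] [∀ i, Module S (L i)]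

structure IsTensorChainMap (dE : ∀ i, E (i + 1) →ₗ[S] E i) (dK : ∀ i, K (i + 1) →ₗ[S] K i)
    (dL : ∀ i, L (i + 1) →ₗ[S] L i) (F : ∀ i j, (E i ⊗[S] K j) →ₗ[S] L (i + j)) : Prop where
  succ_succ : ∀ i j, dL ((i + 1) + j) ∘ₗ F (i + 1) (j + 1)
    = (castK (Nat.add_right_comm i j 1) : L (i + (j + 1)) →ₗ[S] L ((i + 1) + j)) ∘ₗ
        (F i (j + 1) ∘ₗ map (dE i) LinearMap.id)
      + ((-1 : ℤ) ^ (i + 1)) • (F (i + 1) j ∘ₗ map LinearMap.id (dK j))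
  succ_zero : ∀ i, dL i ∘ₗ F (i + 1) 0 = F i 0 ∘ₗ map (dE i) LinearMap.id
  zero_succ : ∀ j, dL (0 + j) ∘ₗ F 0 (j + 1) = F 0 j ∘ₗ map LinearMap.id (dK j)

namespace IsTensorChainMap

variable {dE : ∀ i, E (i + 1) →ₗ[S] E i} {dK : ∀ i, K (i + 1) →ₗ[S] K i}
  {dL : ∀ i, L (i + 1) →ₗ[S] L i} {F G : ∀ i j, (E i ⊗[S] K j) →ₗ[S] L (i + j)}

lemma apply_succ_succ (hF : IsTensorChainMap dE dK dL F) {i j : ℕ} (y : E (i + 1))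
    (x : K (j + 1)) :
    dL ((i + 1) + j) (F (i + 1) (j + 1) (y ⊗ₜ x))
      = castK (S := S) (K := L) (a := i + (j + 1)) (Nat.add_right_comm i j 1)
          (F i (j + 1) (dE i y ⊗ₜ x))
        + ((-1 : ℤ) ^ (i + 1)) • F (i + 1) j (y ⊗ₜ dK j x) := by
  simpa using LinearMap.congr_fun (hF.succ_succ i j) (y ⊗ₜ x)

lemma apply_succ_zero (hF : IsTensorChainMap dE dK dL F) {i : ℕ} (y : E (i + 1)) (x : K 0) :
    dL i (F (i + 1) 0 (y ⊗ₜ x)) = F i 0 (dE i y ⊗ₜ x) := by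
  simpa using LinearMap.congr_fun (hF.succ_zero i) (y ⊗ₜ x)

lemma apply_zero_succ (hF : IsTensorChainMap dE dK dL F) {j : ℕ} (y : E 0) (x : K (j + 1)) :
    dL (0 + j) (F 0 (j + 1) (y ⊗ₜ x)) = F 0 j (y ⊗ₜ dK j x) := by
  simpa using LinearMap.congr_fun (hF.zero_succ j) (y ⊗ₜ x)

lemma sub (hF : IsTensorChainMap dE dK dL F) (hG : IsTensorChainMap dE dK dL G) :
    IsTensorChainMap dE dK dL (fun i j => F i j - G i j) where
  succ_succ i j := by
    simp only [LinearMap.comp_sub, LinearMap.sub_comp, hF.succ_succ, hG.succ_succ, smul_sub]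
    abel
  succ_zero i := by simp only [LinearMap.comp_sub, LinearMap.sub_comp, hF.succ_zero, hG.succ_zero]
  zero_succ j := by simp only [LinearMap.comp_sub, LinearMap.sub_comp, hF.zero_succ, hG.zero_succ]

lemma comp_map_id {σ : ∀ i j, (E i ⊗[S] L j) →ₗ[S] L (i + j)}
    (hσ : IsTensorChainMap dE dL dL σ) {φ : ∀ j, K j →ₗ[S] L j}
    (hφ : ∀ j x, φ j (dK j x) = dL j (φ (j + 1) x)) :
    IsTensorChainMap dE dK dL (fun i j => σ i j ∘ₗ map LinearMap.id (φ j)) where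
  succ_succ i j := TensorProduct.ext' fun y x => by simp [hσ.apply_succ_succ, hφ]
  succ_zero i := TensorProduct.ext' fun y x => by simp [hσ.apply_succ_zero]
  zero_succ j := TensorProduct.ext' fun y x => by simp [hσ.apply_zero_succ, hφ]

lemma chainMap_comp {σ : ∀ i j, (E i ⊗[S] K j) →ₗ[S] K (i + j)}
    (hσ : IsTensorChainMap dE dK dK σ) {φ : ∀ j, K j →ₗ[S] L j}
    (hφ : ∀ j x, φ j (dK j x) = dL j (φ (j + 1) x)) :
    IsTensorChainMap dE dK dL (fun i j => φ (i + j) ∘ₗ σ i j) where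
  succ_succ i j := TensorProduct.ext' fun y x => (hφ _ _).symm.trans <| by
    simp [hσ.apply_succ_succ, apply_castK]
  succ_zero i := TensorProduct.ext' fun y x => (hφ _ _).symm.trans <| by
    simp [hσ.apply_succ_zero]
  zero_succ j := TensorProduct.ext' fun y x => (hφ _ _).symm.trans <| by
    simp [hσ.apply_zero_succ]

end IsTensorChainMap

end TensorChainMap

namespace IsTensorChainMap

variable {S : Type*} [CommRing S] {E K L : ℕ → Type*}
  [∀ i, AddCommGroup (E i)] [∀ i, Module S (E i)] [∀ i, Module.Projective S (E i)]
  [∀ i, AddCommGroup (K i)] [∀ i, Module S (K i)] [∀ i, Module.Projective S (K i)]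
  [∀ i, AddCommGroup (L i)] [∀ i, Module S (L i)] {N : Type*} [AddCommGroup N] [Module S N]
  {dE : ∀ i, E (i + 1) →ₗ[S] E i} {dK : ∀ i, K (i + 1) →ₗ[S] K i}
  {dL : ∀ i, L (i + 1) →ₗ[S] L i} {εL : L 0 →ₗ[S] N} {F : ∀ i j, (E i ⊗[S] K j) →ₗ[S] L (i + j)}

/-- `F - H ∘ ∂` is a cycle when `H` is a null-homotopy in lower degrees, so it lifts along `∂`. -/
lemma exists_homotopy_component (hdE : ∀ i y, dE i (dE (i + 1) y) = 0)
    (hdK : ∀ j x, dK j (dK (j + 1) x) = 0)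
    (hL : ∀ i, LinearMap.ker (dL i) = LinearMap.range (dL (i + 1)))
    (hL0 : LinearMap.ker εL = LinearMap.range (dL 0)) (hF : IsTensorChainMap dE dK dL F)
    (hFε : εL ∘ₗ F 0 0 = 0) (H : ∀ i j, (E i ⊗[S] K j) →ₗ[S] L (i + j + 1)) {i j : ℕ}
    (hH : ∀ i' j', i' + j' < i + j → ∀ z,
      dL (i' + j') (H i' j' z) = F i' j' z - compTotalDiff dE dK H i' j' z) :
    ∃ h : (E i ⊗[S] K j) →ₗ[S] L (i + j + 1),
      dL (i + j) ∘ₗ h = F i j - compTotalDiff dE dK H i j := by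
  rcases i with _ | i <;> rcases j with _ | j
  · simpa using Module.Projective.exists_comp_eq_of_exact hL0 hFε
  · refine Module.Projective.exists_comp_eq_of_exact (hL (0 + j)) (TensorProduct.ext' fun y x => ?_)
    simp [hF.apply_zero_succ, hH 0 j (by omega), compTotalDiff_zero_tmul_dK H hdK]
  · refine Module.Projective.exists_comp_eq_of_exact (hL i) (TensorProduct.ext' fun y x => ?_)
    have hH' : dL i (H i 0 (dE i y ⊗ₜ x))
        = F i 0 (dE i y ⊗ₜ x) - compTotalDiff dE dK H i 0 (dE i y ⊗ₜ x) :=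
      hH i 0 (by omega) _
    simp [hF.apply_succ_zero, hH', compTotalDiff_dE_tmul_zero H hdE]
  · refine Module.Projective.exists_comp_eq_of_exact (hL (i + 1 + j))
      (TensorProduct.ext' fun y x => ?_)
    have hd := compTotalDiff_boundary H hdE hdK y x
    simp only [LinearMap.comp_apply, LinearMap.sub_apply, LinearMap.zero_apply, map_sub,
      hF.apply_succ_succ, compTotalDiff_succ_succ_tmul, map_add, map_zsmul, apply_castK_succ,
      hH i (j + 1) (by omega), hH (i + 1) j (by omega), smul_sub]
    rw [← hd]
    abel

/-- The homotopy is only asserted in total degrees `< n`; that is all that is used below. -/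
theorem exists_nullHomotopy (hdE : ∀ i y, dE i (dE (i + 1) y) = 0)
    (hdK : ∀ j x, dK j (dK (j + 1) x) = 0)
    (hL : ∀ i, LinearMap.ker (dL i) = LinearMap.range (dL (i + 1)))
    (hL0 : LinearMap.ker εL = LinearMap.range (dL 0)) (hF : IsTensorChainMap dE dK dL F)
    (hFε : εL ∘ₗ F 0 0 = 0) (n : ℕ) :
    ∃ H : ∀ i j, (E i ⊗[S] K j) →ₗ[S] L (i + j + 1), ∀ i j, i + j < n → ∀ z,
      dL (i + j) (H i j z) = F i j z - compTotalDiff dE dK H i j z := by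
  induction n with
  | zero => exact ⟨0, fun i j h => absurd h (Nat.not_lt_zero _)⟩
  | succ n ih =>
    obtain ⟨H, hH⟩ := ih
    choose h hh using fun i j (hij : i + j = n) =>
      exists_homotopy_component hdE hdK hL hL0 hF hFε H fun i' j' h' => hH i' j' (hij ▸ h')
    let H' i j := if hij : i + j = n then h i j hij else H i j
    have hH' : ∀ i j, i + j < n → H' i j = H i j := fun i j hij => dif_neg (by omega)
    refine ⟨H', fun i j hij z => ?_⟩
    rw [compTotalDiff_congr H' fun i' j' h' => hH' i' j' (by omega)]
    rcases Nat.lt_succ_iff_lt_or_eq.mp hij with hlt | rfl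
    · rw [hH' i j hlt]
      exact hH i j hlt z
    · simp only [H', dif_pos rfl]
      exact LinearMap.congr_fun (hh i j rfl) z

/-- `hz` says that `∂z ∈ I • (E ⊗ K)`, phrased through an arbitrary `H`. -/
theorem mk_mem_range_quotMap (hdE : ∀ i y, dE i (dE (i + 1) y) = 0)
    (hdK : ∀ j x, dK j (dK (j + 1) x) = 0)
    (hL : ∀ i, LinearMap.ker (dL i) = LinearMap.range (dL (i + 1)))
    (hL0 : LinearMap.ker εL = LinearMap.range (dL 0)) (hF : IsTensorChainMap dE dK dL F)
    (hFε : εL ∘ₗ F 0 0 = 0) (I : Ideal S) {i j : ℕ} {z : E i ⊗[S] K j}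
    (hz : ∀ H, compTotalDiff dE dK H i j z ∈ I • (⊤ : Submodule S (L (i + j)))) :
    Submodule.Quotient.mk (F i j z) ∈ LinearMap.range (quotMap I (dL (i + j))) := by
  obtain ⟨H, hH⟩ := hF.exists_nullHomotopy hdE hdK hL hL0 hFε (i + j + 1)
  refine mk_mem_range_quotMap_of_sub_mem I (a := H i j z) ?_
  rw [hH i j (lt_add_one _) z, sub_sub_cancel_left]
  exact neg_mem (hz H)

end IsTensorChainMap

open TensorProduct in
theorem sigma_top_iso_is_functorial
    (S : Type*) [CommRing S] (I : Ideal S) (c : ℕ)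
    -- the resolution `E` of `R = S/I`, of length `c+1`, with `∂_{c+1} ≅ ∂₁^*`
    (E : ℕ → Type*) [∀ i, AddCommGroup (E i)] [∀ i, Module S (E i)]
    [∀ i, Module.Free S (E i)] [∀ i, Module.Finite S (E i)]
    (dE : ∀ i : ℕ, E (i + 1) →ₗ[S] E i)
    (e₀ : E 0 ≃ₗ[S] S)
    (haug : LinearMap.range (e₀.toLinearMap ∘ₗ dE 0) = I)
    (hEexact : ∀ i, LinearMap.ker (dE i) = LinearMap.range (dE (i + 1)))
    (a : E (c + 1) ≃ₗ[S] Module.Dual S (E 0))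
    (b : E c ≃ₗ[S] Module.Dual S (E 1))
    (hdual : ∀ z : E (c + 1), b (dE c z) = (dE 0).dualMap (a z))
    (u : E (c + 1) ≃ₗ[S] S)
    -- the `R`-modules `M`, `N`, their `S`-free resolutions `K`, `L`, and a map `φ`
    (M : Type*) [AddCommGroup M] [Module S M]
    (N : Type*) [AddCommGroup N] [Module S N]
    (φ : M →ₗ[S] N)
    (K : ℕ → Type*) [∀ i, AddCommGroup (K i)] [∀ i, Module S (K i)]
    [∀ i, Module.Free S (K i)]
    (dK : ∀ i : ℕ, K (i + 1) →ₗ[S] K i)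
    (εK : K 0 →ₗ[S] M)
    (hKexact : ∀ i, LinearMap.ker (dK i) = LinearMap.range (dK (i + 1)))
    (L : ℕ → Type*) [∀ i, AddCommGroup (L i)] [∀ i, Module S (L i)]
    (dL : ∀ i : ℕ, L (i + 1) →ₗ[S] L i)
    (εL : L 0 →ₗ[S] N)
    (hL0 : LinearMap.ker εL = LinearMap.range (dL 0))
    (hLexact : ∀ i, LinearMap.ker (dL i) = LinearMap.range (dL (i + 1)))
    -- `φ̂ : K → L` lifts `φ`
    (φhat : ∀ j : ℕ, K j →ₗ[S] L j)
    (hφhat : ∀ j, (φhat j) ∘ₗ (dK j) = (dL j) ∘ₗ (φhat (j + 1)))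
    (hφaug : εL ∘ₗ (φhat 0) = φ ∘ₗ εK)
    -- the chain maps `σ^M : E ⊗ K → K` and `σ^N : E ⊗ L → L`
    (σM : ∀ i j : ℕ, (E i ⊗[S] K j) →ₗ[S] K (i + j))
    (hσMaug : ∀ (y : E 0) (x : K 0), εK (σM 0 0 (y ⊗ₜ x)) = (e₀ y) • (εK x))
    (hσMchain : ∀ i j,
      (dK ((i + 1) + j)) ∘ₗ (σM (i + 1) (j + 1))
        = (castK (by omega) : K (i + (j + 1)) →ₗ[S] K ((i + 1) + j)) ∘ₗ
            ((σM i (j + 1)) ∘ₗ (TensorProduct.map (dE i) LinearMap.id))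
          + ((-1 : ℤ) ^ (i + 1)) •
            ((σM (i + 1) j) ∘ₗ (TensorProduct.map LinearMap.id (dK j))))
    (hσMchain0 : ∀ i,
      (dK i) ∘ₗ (σM (i + 1) 0) = (σM i 0) ∘ₗ (TensorProduct.map (dE i) LinearMap.id))
    (hσMchain0' : ∀ j,
      (dK (0 + j)) ∘ₗ (σM 0 (j + 1))
        = (σM 0 j) ∘ₗ (TensorProduct.map LinearMap.id (dK j)))
    (σN : ∀ i j : ℕ, (E i ⊗[S] L j) →ₗ[S] L (i + j))
    (hσNaug : ∀ (y : E 0) (x : L 0), εL (σN 0 0 (y ⊗ₜ x)) = (e₀ y) • (εL x))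
    (hσNchain : ∀ i j,
      (dL ((i + 1) + j)) ∘ₗ (σN (i + 1) (j + 1))
        = (castK (by omega) : L (i + (j + 1)) →ₗ[S] L ((i + 1) + j)) ∘ₗ
            ((σN i (j + 1)) ∘ₗ (TensorProduct.map (dE i) LinearMap.id))
          + ((-1 : ℤ) ^ (i + 1)) •
            ((σN (i + 1) j) ∘ₗ (TensorProduct.map LinearMap.id (dL j))))
    (hσNchain0 : ∀ i,
      (dL i) ∘ₗ (σN (i + 1) 0) = (σN i 0) ∘ₗ (TensorProduct.map (dE i) LinearMap.id))
    (hσNchain0' : ∀ j,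
      (dL (0 + j)) ∘ₗ (σN 0 (j + 1))
        = (σN 0 j) ∘ₗ (TensorProduct.map LinearMap.id (dL j)))
    -- the maps `σ^M_{c+1,•}`, `σ^N_{c+1,•}` via `u : E_{c+1} ≅ S`
    (sigM : ∀ j : ℕ, K j →ₗ[S] K (c + 1 + j))
    (hsigM : ∀ (j : ℕ) (x : K j), sigM j x = σM (c + 1) j ((u.symm 1) ⊗ₜ x))
    (sigN : ∀ j : ℕ, L j →ₗ[S] L (c + 1 + j))
    (hsigN : ∀ (j : ℕ) (x : L j), sigN j x = σN (c + 1) j ((u.symm 1) ⊗ₜ x)) :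
    -- the squares `Tor_i(R,φ)`/`Tor_{i+c+1}(R,φ)` against `σ^M_*, σ^N_*` commute:
    -- on `H₀`
    (∀ x : K 0 ⧸ (I • (⊤ : Submodule S (K 0))),
      (quotMap I (sigN 0)) ((quotMap I (φhat 0)) x)
          - (quotMap I (φhat (c + 1 + 0))) ((quotMap I (sigM 0)) x)
        ∈ LinearMap.range (quotMap I (dL (c + 1)))) ∧
    -- and on every `H_{i+1}`
    (∀ (i : ℕ) (x : K (i + 1) ⧸ (I • (⊤ : Submodule S (K (i + 1))))),
      (quotMap I (dK i)) x = 0 →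
      (quotMap I (sigN (i + 1))) ((quotMap I (φhat (i + 1))) x)
          - (quotMap I (φhat (c + 1 + (i + 1)))) ((quotMap I (sigM (i + 1))) x)
        ∈ LinearMap.range (quotMap I (dL (c + 1 + (i + 1))))) := by
  have hdE : ∀ i y, dE i (dE (i + 1) y) = 0 := fun i y => (hEexact i).ge ⟨y, rfl⟩
  have hdK : ∀ j x, dK j (dK (j + 1) x) = 0 := fun j x => (hKexact j).ge ⟨x, rfl⟩
  have hφ : ∀ j x, φhat j (dK j x) = dL j (φhat (j + 1) x) :=
    fun j x => LinearMap.congr_fun (hφhat j) x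
  have hF : IsTensorChainMap dE dK dL
      (fun i j => σN i j ∘ₗ map LinearMap.id (φhat j) - φhat (i + j) ∘ₗ σM i j) :=
    (IsTensorChainMap.comp_map_id ⟨hσNchain, hσNchain0, hσNchain0'⟩ hφ).sub
      (IsTensorChainMap.chainMap_comp ⟨hσMchain, hσMchain0, hσMchain0'⟩ hφ)
  have hFε : εL ∘ₗ (σN 0 0 ∘ₗ map LinearMap.id (φhat 0) - φhat 0 ∘ₗ σM 0 0) = 0 :=
    TensorProduct.ext' fun y x => by
      simp [hσNaug, hσMaug, ← LinearMap.comp_apply εL (φhat 0), hφaug]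
  have hy : dE c (u.symm 1) ∈ I • (⊤ : Submodule S (E c)) := by
    have hb := dualMap_mem_smul_top I e₀ haug (a (u.symm 1))
    rw [← hdual] at hb
    simpa using b.symm.toLinearMap.apply_mem_smul_top I hb
  refine ⟨fun x => ?_, fun i x hx => ?_⟩
  · obtain ⟨x, rfl⟩ := Submodule.Quotient.mk_surjective _ x
    simpa [hsigM, hsigN] using
      hF.mk_mem_range_quotMap hdE hdK hLexact hL0 hFε I (i := c + 1) (j := 0)
        fun H => compTotalDiff_succ_zero_tmul_mem H I hy x
  · obtain ⟨x, rfl⟩ := Submodule.Quotient.mk_surjective _ x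
    have hx : dK i x ∈ I • (⊤ : Submodule S (K i)) := (Submodule.Quotient.mk_eq_zero _).mp hx
    simpa [hsigM, hsigN] using
      hF.mk_mem_range_quotMap hdE hdK hLexact hL0 hFε I (i := c + 1) (j := i + 1)
        fun H => compTotalDiff_succ_succ_tmul_mem H I hy hx
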